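/- Let a, b, c be real numbers with c ≠ 0. For every n ∈ ℕ, the monic polynomial matrix Pₙ := Aₙ⁻¹·Qₙ satisfies Pₙ''·G₂ + Pₙ'·G₁ + Pₙ·G₀ = Λₙ(D₂)·Pₙ as matrices of polynomials, where Λₙ(D₂) = [[2+4/c², 0, -2a(n+1)/c],[0, 2+4/c², 0],[0, 0, -2n]]; that is, the monic orthogonal polynomials are eigenfunctions of D₂ with eigenvalue Λₙ(D₂). -/

import Mathlib

/-! Since `hₙ' = n hₙ₋₁` and `hₙ₊₁ = x hₙ - hₙ'/2`, the equation `Qₙ D₂ = Λₙ Qₙ` reduces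
entrywise to rational identities. As `D₂` acts on the right, it commutes with left multiplication
by the constant matrix `Aₙ⁻¹`; since `Aₙ` commutes with `Λₙ`, so does `Aₙ⁻¹`, and `Pₙ = Aₙ⁻¹ Qₙ`
inherits the eigenvalue. -/

open Matrix Polynomial

/-- The monic Hermite polynomials for the weight e^{-x²}:
h₀ = 1, h_{n+1}(x) = x·hₙ(x) - (1/2)·hₙ'(x). -/
noncomputable def h : ℕ → Polynomial ℝ
  | 0 => 1
  | n + 1 => X * h n - C (1 / 2 : ℝ) * derivative (h n)

/-- The sequence Qₙ of matrix orthogonal polynomials for W. -/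
noncomputable def Qmat (a b c : ℝ) (n : ℕ) : Matrix (Fin 3) (Fin 3) (Polynomial ℝ) :=
  !![(h n).comp (X - C b),
     C a * (h (n + 1) - (h n).comp (X - C b) * X),
     0;
     -(C (a * Real.exp (-b ^ 2) * n / 2)) * (h (n - 1)).comp (X - C b),
     C (a ^ 2 * Real.exp (-b ^ 2) * n / 2) * (h (n - 1)).comp (X - C b) * X
       + h n + C (c ^ 2 * n / 2) * h (n - 1) * X,
     -(C (c * n / 2)) * h (n - 1);
     0,
     C c * (h (n + 1) - h n * X),
     h n]

/-- The leading coefficient Aₙ of Qₙ. -/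
noncomputable def Amat (a b c : ℝ) (n : ℕ) : Matrix (Fin 3) (Fin 3) ℝ :=
  !![1, a * b * n, 0;
     0, a ^ 2 * Real.exp (-b ^ 2) * n / 2 + 1 + c ^ 2 * n / 2, 0;
     0, 0, 1]

/-- Second-order (polynomial) coefficient of the operator D₂. -/
noncomputable def G2p (a c : ℝ) : Matrix (Fin 3) (Fin 3) (Polynomial ℝ) :=
  !![0, C a * X, 0; 0, 1, 0; 0, C c * X, 0]

/-- First-order (polynomial) coefficient of the operator D₂. -/
noncomputable def G1p (a c : ℝ) : Matrix (Fin 3) (Fin 3) (Polynomial ℝ) :=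
  !![0, C (2 * a), C (-2 * a / c) * X;
     0, 0, C (-2 / c);
     0, C (2 * c + 2 / c), -2 * X]

/-- Zeroth-order coefficient of the operator D₂. -/
noncomputable def G0p (a c : ℝ) : Matrix (Fin 3) (Fin 3) (Polynomial ℝ) :=
  !![C (2 + 4 / c ^ 2), 0, C (-2 * a / c);
     0, C (2 + 4 / c ^ 2), 0;
     0, 0, 0]

/-- Eigenvalue matrix Λₙ(D₂). -/
noncomputable def Lambda2 (a c : ℝ) (n : ℕ) : Matrix (Fin 3) (Fin 3) ℝ :=
  !![2 + 4 / c ^ 2, 0, -2 * a * ((n : ℝ) + 1) / c;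
     0, 2 + 4 / c ^ 2, 0;
     0, 0, -2 * (n : ℝ)]

section RightDiffOp

variable {R : Type*} [CommRing R] {m n : Type*} [Fintype m]

theorem map_linearMap_map_C_mul (f : R[X] →ₗ[R] R[X]) (B : Matrix m m R)
    (P : Matrix m n R[X]) :
    (B.map C * P).map (fun p => f p) = B.map C * P.map (fun p => f p) := by
  ext1 i j
  simp [Matrix.mul_apply, ← smul_eq_C_mul]

variable [Fintype n]

noncomputable def rightDiffOp (G₂ G₁ G₀ : Matrix n n R[X]) (P : Matrix m n R[X]) :
    Matrix m n R[X] :=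
  P.map (fun p => derivative (derivative p)) * G₂ + P.map (fun p => derivative p) * G₁ + P * G₀

theorem rightDiffOp_map_C_mul (G₂ G₁ G₀ : Matrix n n R[X]) (B : Matrix m m R)
    (P : Matrix m n R[X]) :
    rightDiffOp G₂ G₁ G₀ (B.map C * P) = B.map C * rightDiffOp G₂ G₁ G₀ P := by
  have hmap₁ : (B.map C * P).map (fun p => derivative p)
      = B.map C * P.map (fun p => derivative p) := map_linearMap_map_C_mul derivative B P
  have hmap₂ : (B.map C * P).map (fun p => derivative (derivative p))
      = B.map C * P.map (fun p => derivative (derivative p)) :=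
    map_linearMap_map_C_mul (derivative ∘ₗ derivative) B P
  simp only [rightDiffOp, hmap₁, hmap₂, Matrix.mul_assoc, Matrix.mul_add]

theorem rightDiffOp_map_C_mul_of_commute {G₂ G₁ G₀ : Matrix n n R[X]} {P : Matrix m n R[X]}
    {L : Matrix m m R} (hP : rightDiffOp G₂ G₁ G₀ P = L.map C * P) {B : Matrix m m R}
    (hBL : Commute B L) :
    rightDiffOp G₂ G₁ G₀ (B.map C * P) = L.map C * (B.map C * P) := by
  rw [rightDiffOp_map_C_mul, hP, ← Matrix.mul_assoc, ← Matrix.mul_assoc, ← Matrix.map_mul,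
    hBL.eq, Matrix.map_mul]

end RightDiffOp

theorem Matrix.map_inv_of_isUnit_det {n R S : Type*} [Fintype n] [DecidableEq n] [CommRing R]
    [CommRing S] (f : R →+* S) {A : Matrix n n R} (hA : IsUnit A.det) :
    (A.map f)⁻¹ = A⁻¹.map f :=
  inv_eq_left_inv <| by
    rw [← Matrix.map_mul, nonsing_inv_mul _ hA, Matrix.map_one _ f.map_zero f.map_one]

theorem Commute.matrix_inv_left {n R : Type*} [Fintype n] [DecidableEq n] [CommRing R]
    {A L : Matrix n n R} (hAL : Commute A L) : Commute A⁻¹ L := by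
  by_cases hA : IsUnit A.det
  · let := invertibleOfIsUnitDet A hA
    rw [← invOf_eq_nonsing_inv]
    exact hAL.invOf_left
  · rw [nonsing_inv_apply_not_isUnit _ hA]
    exact Commute.zero_left L

theorem derivative_h_succ (n : ℕ) : derivative (h (n + 1)) = C ((n : ℝ) + 1) * h n := by
  induction n with
  | zero => simp [h]
  | succ n ih =>
    rw [h.eq_2 (n + 1), derivative_sub, derivative_mul, derivative_C_mul, ih, derivative_C_mul,
      h.eq_2 n]
    simp only [derivative_X, Nat.cast_add, Nat.cast_one, map_add, map_one]
    ring

theorem derivative_h (n : ℕ) : derivative (h n) = C (n : ℝ) * h (n - 1) := by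
  cases n with
  | zero => simp [h]
  | succ n => simp [derivative_h_succ]

theorem h_succ_eq (n : ℕ) : h (n + 1) = X * h n - C ((n : ℝ) / 2) * h (n - 1) := by
  rw [h.eq_2, derivative_h, ← mul_assoc, ← C_mul]
  ring_nf

/- Once `hₙ'` and `h_{n+1}` are expressed through `hₙ` and `h_{n-1}`, every entry is a rational
identity in which the shifted polynomials `hₖ(x - b)` cancel as free variables. -/
theorem rightDiffOp_Qmat (a b c : ℝ) (hc : c ≠ 0) (n : ℕ) :
    rightDiffOp (G2p a c) (G1p a c) (G0p a c) (Qmat a b c n)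
      = (Lambda2 a c n).map C * Qmat a b c n := by
  refine Matrix.ext fun i j => ?_
  fin_cases i <;> fin_cases j <;>
    simp [rightDiffOp, Qmat, G2p, G1p, G0p, Lambda2, Matrix.mul_apply, Fin.sum_univ_three,
      derivative_h, derivative_comp] <;>
    apply Polynomial.funext <;> intro x <;> simp [eval_comp, h_succ_eq] <;> field_simp <;> ring

theorem commute_Amat_Lambda2 (a b c : ℝ) (n : ℕ) : Commute (Amat a b c n) (Lambda2 a c n) := by
  refine Matrix.ext fun i j => ?_
  fin_cases i <;> fin_cases j <;>
    simp [Amat, Lambda2, Matrix.mul_apply, Fin.sum_univ_three] <;> ring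

theorem isUnit_det_Amat (a b c : ℝ) (n : ℕ) : IsUnit (Amat a b c n).det := by
  have hdet : (Amat a b c n).det = a ^ 2 * Real.exp (-b ^ 2) * n / 2 + 1 + c ^ 2 * n / 2 := by
    simp [Amat, det_fin_three]
  rw [hdet, isUnit_iff_ne_zero]
  positivity

/-- the monic orthogonal polynomials Pₙ = Aₙ⁻¹·Qₙ are eigenfunctions
of D₂: Pₙ''·G₂ + Pₙ'·G₁ + Pₙ·G₀ = Λₙ(D₂)·Pₙ. -/
theorem monic_eigenfunctions_D2 (a b c : ℝ) (hc : c ≠ 0) (n : ℕ) :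
    (((Amat a b c n).map C)⁻¹ * Qmat a b c n).map (fun p => derivative (derivative p))
        * G2p a c
      + (((Amat a b c n).map C)⁻¹ * Qmat a b c n).map (fun p => derivative p) * G1p a c
      + (((Amat a b c n).map C)⁻¹ * Qmat a b c n) * G0p a c
    = (Lambda2 a c n).map C * (((Amat a b c n).map C)⁻¹ * Qmat a b c n) := by
  rw [Matrix.map_inv_of_isUnit_det C (isUnit_det_Amat a b c n)]
  exact rightDiffOp_map_C_mul_of_commute (rightDiffOp_Qmat a b c hc n)
    ((commute_Amat_Lambda2 a b c n).matrix_inv_left)
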